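/- Let |ψ⟩ be a pure n-qubit state whose stabilizer group G has cardinality 2^{n−ν}, and let h₀ = 𝟙, h₁, …, h_k be Hermitian Pauli operators with Tr(h_i ψ) ≠ 0 lying in pairwise distinct cosets of G (with h_iG ≠ −h_jG for i ≠ j). Then Σ_{i=0}^{k} Tr(h_i ψ)² ≤ 2^ν. -/

import Mathlib

open scoped Matrix ComplexOrder ENNReal Classical

noncomputable section

abbrev QVec (n : ℕ) := (Fin n → Fin 2) → ℂ
abbrev QMat (n : ℕ) := Matrix (Fin n → Fin 2) (Fin n → Fin 2) ℂ

/-- `ψ` is a unit vector (a pure state). -/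
def IsUnitVec {n : ℕ} (ψ : QVec n) : Prop := ∑ x, Complex.normSq (ψ x) = 1

/-- The ℓ² norm of a vector. -/
def vnorm {n : ℕ} (v : QVec n) : ℝ := Real.sqrt (∑ x, Complex.normSq (v x))

/-- The density matrix `|ψ⟩⟨ψ|`. -/
def dm {n : ℕ} (ψ : QVec n) : QMat n := Matrix.vecMulVec ψ (star ψ)

/-- The four single-qubit Pauli matrices I, X, Y, Z. -/
def pauli1 : Fin 4 → Matrix (Fin 2) (Fin 2) ℂ :=
  ![1, !![0, 1; 1, 0], !![0, -Complex.I; Complex.I, 0], !![1, 0; 0, -1]]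

/-- The `n`-qubit Pauli operator `P₁ ⊗ ⋯ ⊗ P_n` given by a string `p`. -/
def pauliOp {n : ℕ} (p : Fin n → Fin 4) : QMat n :=
  fun x y => ∏ j, pauli1 (p j) (x j) (y j)

/-- The `n`-qubit Pauli group: matrices `i^a · P₁ ⊗ ⋯ ⊗ P_n`. -/
def PauliGroup (n : ℕ) : Set (QMat n) :=
  {M | ∃ (a : Fin 4) (p : Fin n → Fin 4), M = Complex.I ^ (a : ℕ) • pauliOp p}

/-- A Hermitian Pauli operator: `± P₁ ⊗ ⋯ ⊗ P_n`. -/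
def IsHermPauli {n : ℕ} (M : QMat n) : Prop :=
  ∃ (s : ℂ) (p : Fin n → Fin 4), (s = 1 ∨ s = -1) ∧ M = s • pauliOp p

/-- The stabilizer group `G = {P ∈ 𝒫_n : P|ψ⟩ = |ψ⟩}` of a pure state. -/
def stabGroup {n : ℕ} (ψ : QVec n) : Set (QMat n) :=
  {P | P ∈ PauliGroup n ∧ P.mulVec ψ = ψ}

/-- `M` is supported on the qubits in `A` (acts as the identity on the rest),
i.e. `M = f_A ⊗ 𝟙` for some matrix `f` on the `A` qubits. -/
def MatSupportedOn {n : ℕ} (A : Finset (Fin n)) (M : QMat n) : Prop :=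
  ∃ f : ({j // j ∈ A} → Fin 2) → ({j // j ∈ A} → Fin 2) → ℂ,
    ∀ x y, M x y =
      if ∀ j ∉ A, x j = y j then f (fun j => x j.1) (fun j => y j.1) else 0

/-- The local stabilizer subgroup `G_A`: stabilizers acting as the identity outside `A`. -/
def localStab {n : ℕ} (ψ : QVec n) (A : Finset (Fin n)) : Set (QMat n) :=
  {P | P ∈ stabGroup ψ ∧ MatSupportedOn A P}

/-- `log₂` of the cardinality of a set. -/
def logCard {α : Type*} (S : Set α) : ℝ := Real.logb 2 S.ncard

/-- The stabilizer entanglement `ℰ(ψ; A|B) = (|S| − |S_A| − |S_B|)/2` (with `B = Aᶜ`). -/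
def stabEnt {n : ℕ} (ψ : QVec n) (A : Finset (Fin n)) : ℝ :=
  (logCard (stabGroup ψ) - logCard (localStab ψ A) - logCard (localStab ψ Aᶜ)) / 2

/-- Combine an assignment on `A` and on `Aᶜ` into one on all qubits. -/
def mergeFn {n : ℕ} (A : Finset (Fin n)) (x : {j // j ∈ A} → Fin 2)
    (z : {j // j ∈ Aᶜ} → Fin 2) : Fin n → Fin 2 :=
  fun j => if h : j ∈ A then x ⟨j, h⟩ else z ⟨j, Finset.mem_compl.mpr h⟩

/-- The reduced density matrix `ψ_A = Tr_{Aᶜ} |ψ⟩⟨ψ|`. -/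
def reducedDM {n : ℕ} (A : Finset (Fin n)) (ψ : QVec n) :
    Matrix ({j // j ∈ A} → Fin 2) ({j // j ∈ A} → Fin 2) ℂ :=
  fun x y => ∑ z : {j // j ∈ Aᶜ} → Fin 2, ψ (mergeFn A x z) * star (ψ (mergeFn A y z))

/-- The α-Rényi entropy (base 2) of a Hermitian matrix, defined through its eigenvalues:
`S₀ = log₂ rank`, `S₁` the von Neumann entropy, `S_∞ = −log₂` (largest eigenvalue, which is
the operator norm for positive semidefinite matrices), and
`S_α = (1−α)⁻¹ log₂ Σ λ_i^α` otherwise. -/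
def renyi {m : Type*} [Fintype m] [DecidableEq m] (α : ℝ≥0∞)
    (ρ : Matrix m m ℂ) : ℝ :=
  if h : ρ.IsHermitian then
    if α = 0 then Real.logb 2 (ρ.rank : ℝ)
    else if α = 1 then -∑ i, h.eigenvalues i * Real.logb 2 (h.eigenvalues i)
    else if α = ⊤ then -Real.logb 2 (⨆ i, h.eigenvalues i)
    else (1 / (1 - α.toReal)) * Real.logb 2 (∑ i, h.eigenvalues i ^ α.toReal)
  else 0

def IsUnitary {n : ℕ} (U : QMat n) : Prop := U * Uᴴ = 1 ∧ Uᴴ * U = 1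

/-- A Clifford unitary: a unitary whose conjugation action maps the Pauli group onto itself. -/
def IsClifford {n : ℕ} (U : QMat n) : Prop :=
  IsUnitary U ∧ (fun P => U * P * Uᴴ) '' PauliGroup n = PauliGroup n

/-- Amplitudes of the Bell pair `|φ₊⟩ = (|00⟩+|11⟩)/√2`. -/
def bellAmp (a b : Fin 2) : ℂ := if a = b then ((Real.sqrt 2 : ℝ) : ℂ)⁻¹ else 0

/-- Trace out the last `m` qubits of a pure state on `n + m` qubits. -/
def traceOutLast {n m : ℕ} (Ψ : QVec (n + m)) : QMat n :=
  fun x y => ∑ z : Fin m → Fin 2,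
    Ψ (Fin.append x z) * star (Ψ (Fin.append y z))

/-- `Tr √ρ` for a positive semidefinite matrix (junk value `0` otherwise). -/
def sqrtTrace {m : Type*} [Fintype m] [DecidableEq m] (ρ : Matrix m m ℂ) : ℝ :=
  if h : ρ.PosSemidef then (h.1.eigenvectorUnitary.1 *
    Matrix.diagonal (fun i => ((Real.sqrt (h.1.eigenvalues i) : ℝ) : ℂ)) *
    (star h.1.eigenvectorUnitary : Matrix m m ℂ)).trace.re else 0

/-- `S_{1/2}(ψ_A) = 2 log₂ Tr √ψ_A`. -/
def sHalf {n : ℕ} (A : Finset (Fin n)) (ψ : QVec n) : ℝ :=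
  2 * Real.logb 2 (sqrtTrace (reducedDM A ψ))

/-- The set `SEP^{(E)}(A;B)`: convex hull of pure states with `S_{1/2}` entanglement ≤ E. -/
def SEPE {n : ℕ} (A : Finset (Fin n)) (E : ℝ) : Set (QMat n) :=
  convexHull ℝ {ρ | ∃ ψ : QVec n, IsUnitVec ψ ∧ sHalf A ψ ≤ E ∧ ρ = dm ψ}

/-- `ψ` is a product state across the bipartition `A | Aᶜ`. -/
def IsProdAcross {n : ℕ} (A : Finset (Fin n)) (ψ : QVec n) : Prop :=
  ∃ (f : ({j // j ∈ A} → Fin 2) → ℂ) (g : ({j // j ∈ Aᶜ} → Fin 2) → ℂ),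
    ∀ x, ψ x = f (fun j => x j.1) * g (fun j => x j.1)

/-- The separable states across `A | Aᶜ`. -/
def SEPset {n : ℕ} (A : Finset (Fin n)) : Set (QMat n) :=
  convexHull ℝ {ρ | ∃ ψ : QVec n, IsUnitVec ψ ∧ IsProdAcross A ψ ∧ ρ = dm ψ}

/-- The trace norm `‖X‖₁ = Tr √(XᴴX)` (sum of singular values). -/
def traceNorm {m : Type*} [Fintype m] [DecidableEq m] (X : Matrix m m ℂ) : ℝ :=
  sqrtTrace (Xᴴ * X)

end

noncomputable section

/-! Multiplying `h_i` by an element `g` of the stabilizer group does not change its expectation,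
since `g ψ = ψ`. As that expectation is real and nonzero, `h_i g = ± P` for a Pauli string `P`,
and the coset conditions make the strings obtained from distinct pairs `(i, g)` distinct. Hence
`|G| Σ_i Tr(h_i ψ)²` is part of the sum `Σ_P Tr(P ψ)²`, which equals `2^n Tr ψ² = 2^n` by the
completeness of the Pauli basis, `Σ_P Tr(P A) P = 2^n A`. -/

open Complex

lemma Fintype.sum_comp_le_sum_of_injective {α β M : Type*} [Fintype α] [Fintype β]
    [AddCommMonoid M] [PartialOrder M] [IsOrderedAddMonoid M] {F : α → β}
    (hF : Function.Injective F) {f : β → M} (hf : ∀ b, 0 ≤ f b) :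
    ∑ a, f (F a) ≤ ∑ b, f b :=
  (Finset.sum_map Finset.univ ⟨F, hF⟩ f).symm.trans_le (Finset.sum_le_univ_sum_of_nonneg hf)

lemma eq_or_eq_neg_of_eq_or_eq_neg {α : Type*} [InvolutiveNeg α] {a b c : α}
    (ha : a = c ∨ a = -c) (hb : b = c ∨ b = -c) : a = b ∨ a = -b := by
  rcases ha with rfl | rfl <;> rcases hb with rfl | rfl <;> simp

def pauliMulIdx : Fin 4 → Fin 4 → Fin 4 :=
  ![![0, 1, 2, 3], ![1, 0, 3, 2], ![2, 3, 0, 1], ![3, 2, 1, 0]]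

def pauliMulPhase : Fin 4 → Fin 4 → ℕ :=
  ![![0, 0, 0, 0], ![0, 0, 1, 3], ![0, 3, 0, 1], ![0, 1, 3, 0]]

lemma pauli1_mul (a b : Fin 4) :
    pauli1 a * pauli1 b = I ^ pauliMulPhase a b • pauli1 (pauliMulIdx a b) := by
  fin_cases a <;> fin_cases b <;>
    · ext i j
      fin_cases i <;> fin_cases j <;>
        simp [pauli1, pauliMulIdx, pauliMulPhase, Matrix.mul_apply, pow_succ]

lemma pauli1_conjTranspose (a : Fin 4) : (pauli1 a)ᴴ = pauli1 a := by
  fin_cases a <;>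
    · ext i j
      fin_cases i <;> fin_cases j <;> simp [pauli1]

lemma sum_pauli1_apply_mul_apply (a b c d : Fin 2) :
    ∑ k, pauli1 k a b * pauli1 k c d = if a = d ∧ b = c then 2 else 0 := by
  fin_cases a <;> fin_cases b <;> fin_cases c <;> fin_cases d <;>
    simp [pauli1, Fin.sum_univ_four] <;> norm_num

variable {n : ℕ}

lemma pauliOp_mul (p r : Fin n → Fin 4) :
    pauliOp p * pauliOp r =
      I ^ (∑ j, pauliMulPhase (p j) (r j)) • pauliOp (fun j => pauliMulIdx (p j) (r j)) := by
  ext x y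
  have hqubit : ∀ j, ∑ b, pauli1 (p j) (x j) b * pauli1 (r j) b (y j) =
      I ^ pauliMulPhase (p j) (r j) * pauli1 (pauliMulIdx (p j) (r j)) (x j) (y j) := by
    intro j
    simpa [Matrix.mul_apply] using congrFun₂ (pauli1_mul (p j) (r j)) (x j) (y j)
  simp only [Matrix.mul_apply, pauliOp, Matrix.smul_apply, smul_eq_mul, ← Finset.prod_mul_distrib]
  rw [← Fintype.prod_sum fun j b => pauli1 (p j) (x j) b * pauli1 (r j) b (y j)]
  simp only [hqubit, Finset.prod_mul_distrib, Finset.prod_pow_eq_pow_sum]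

lemma pauliOp_zero : pauliOp (fun _ : Fin n => (0 : Fin 4)) = 1 := by
  ext x y
  simp [pauliOp, pauli1, Matrix.one_apply, Fintype.prod_ite_zero, funext_iff]

lemma pauliOp_mul_self (p : Fin n → Fin 4) : pauliOp p * pauliOp p = 1 := by
  have hdiag : ∀ a, pauliMulPhase a a = 0 ∧ pauliMulIdx a a = 0 := by decide
  simp [pauliOp_mul, hdiag, pauliOp_zero]

lemma pauliOp_conjTranspose (p : Fin n → Fin 4) : (pauliOp p)ᴴ = pauliOp p := by
  ext x y
  simp only [Matrix.conjTranspose_apply, pauliOp, star_prod]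
  exact Finset.prod_congr rfl fun j _ => congrFun₂ (pauli1_conjTranspose (p j)) (x j) (y j)

lemma sum_pauliOp_apply_mul_apply (x y z w : Fin n → Fin 2) :
    ∑ p : Fin n → Fin 4, pauliOp p x y * pauliOp p z w =
      if x = w ∧ y = z then 2 ^ n else 0 := by
  simp only [pauliOp, ← Finset.prod_mul_distrib]
  rw [← Fintype.prod_sum fun j k => pauli1 k (x j) (y j) * pauli1 k (z j) (w j)]
  simp only [sum_pauli1_apply_mul_apply, Fintype.prod_ite_zero, Finset.prod_const,
    Finset.card_univ, Fintype.card_fin, forall_and, ← funext_iff]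

lemma sum_trace_pauliOp_mul_smul_pauliOp (A : QMat n) :
    ∑ p : Fin n → Fin 4, (pauliOp p * A).trace • pauliOp p = (2 ^ n : ℂ) • A := by
  ext z w
  simp only [Matrix.sum_apply, Matrix.smul_apply, smul_eq_mul, Matrix.trace, Matrix.diag_apply,
    Matrix.mul_apply, Finset.sum_mul]
  calc ∑ p : Fin n → Fin 4, ∑ y, ∑ x, pauliOp p y x * A x y * pauliOp p z w
      = ∑ y, ∑ x, (∑ p : Fin n → Fin 4, pauliOp p y x * pauliOp p z w) * A x y := by
        rw [Finset.sum_comm]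
        refine Finset.sum_congr rfl fun y _ => ?_
        rw [Finset.sum_comm]
        simp only [Finset.sum_mul, mul_right_comm]
    _ = (2 ^ n : ℂ) * A z w := by
        simp [sum_pauliOp_apply_mul_apply, ite_and]

lemma sum_trace_pauliOp_mul_mul_trace_pauliOp_mul (A B : QMat n) :
    ∑ p : Fin n → Fin 4, (pauliOp p * A).trace * (pauliOp p * B).trace =
      2 ^ n * (A * B).trace := by
  calc ∑ p : Fin n → Fin 4, (pauliOp p * A).trace * (pauliOp p * B).trace
      = ((∑ p : Fin n → Fin 4, (pauliOp p * A).trace • pauliOp p) * B).trace := by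
        simp only [Finset.sum_mul, Matrix.trace_sum, Matrix.smul_mul, Matrix.trace_smul,
          smul_eq_mul]
    _ = 2 ^ n * (A * B).trace := by
        rw [sum_trace_pauliOp_mul_smul_pauliOp, Matrix.smul_mul, Matrix.trace_smul, smul_eq_mul]

lemma IsUnitVec.ne_zero {ψ : QVec n} (hψ : IsUnitVec ψ) : ψ ≠ 0 := by
  rintro rfl
  simp [IsUnitVec] at hψ

lemma IsUnitVec.star_dotProduct_self {ψ : QVec n} (hψ : IsUnitVec ψ) : star ψ ⬝ᵥ ψ = 1 := by
  simp only [dotProduct, Pi.star_apply, Complex.star_def, mul_comm, Complex.mul_conj]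
  exact_mod_cast hψ

lemma dm_isHermitian (ψ : QVec n) : (dm ψ).IsHermitian := by
  simp [Matrix.IsHermitian, dm]

lemma trace_dm_mul_dm {ψ : QVec n} (hψ : IsUnitVec ψ) : (dm ψ * dm ψ).trace = 1 := by
  rw [dm, Matrix.vecMulVec_mul_vecMulVec, hψ.star_dotProduct_self, one_smul,
    Matrix.trace_vecMulVec, dotProduct_comm, hψ.star_dotProduct_self]

lemma mul_dm_of_mulVec_eq {g : QMat n} {ψ : QVec n} (hg : g *ᵥ ψ = ψ) : g * dm ψ = dm ψ := by
  rw [dm, Matrix.mul_vecMulVec, hg]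

lemma star_trace_mul_dm {M : QMat n} (hM : M.IsHermitian) (ψ : QVec n) :
    star (M * dm ψ).trace = (M * dm ψ).trace := by
  rw [← Matrix.trace_conjTranspose, Matrix.conjTranspose_mul, (dm_isHermitian ψ).eq, hM.eq,
    Matrix.trace_mul_comm]

lemma pauliOp_isHermitian (p : Fin n → Fin 4) : (pauliOp p).IsHermitian :=
  pauliOp_conjTranspose p

lemma sum_sq_re_trace_pauliOp_mul_dm {ψ : QVec n} (hψ : IsUnitVec ψ) :
    ∑ p : Fin n → Fin 4, ((pauliOp p * dm ψ).trace.re) ^ 2 = 2 ^ n := by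
  have hreal : ∀ p : Fin n → Fin 4, (((pauliOp p * dm ψ).trace.re : ℝ) : ℂ) =
      (pauliOp p * dm ψ).trace :=
    fun p => Complex.conj_eq_iff_re.mp (star_trace_mul_dm (pauliOp_isHermitian p) ψ)
  have h := sum_trace_pauliOp_mul_mul_trace_pauliOp_mul (dm ψ) (dm ψ)
  rw [trace_dm_mul_dm hψ, mul_one] at h
  have hcast : ∑ p : Fin n → Fin 4, (pauliOp p * dm ψ).trace * (pauliOp p * dm ψ).trace =
      ((∑ p : Fin n → Fin 4, ((pauliOp p * dm ψ).trace.re) ^ 2 : ℝ) : ℂ) := by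
    push_cast
    exact Finset.sum_congr rfl fun p _ => by rw [hreal, sq]
  exact_mod_cast hcast ▸ h

lemma pow_I_smul_pauliOp_mem_pauliGroup (m : ℕ) (p : Fin n → Fin 4) :
    I ^ m • pauliOp p ∈ PauliGroup n :=
  ⟨⟨m % 4, Nat.mod_lt m (by norm_num)⟩, p, by rw [← pow_eq_pow_mod m I_pow_four]⟩

lemma mul_mem_pauliGroup {M N : QMat n} (hM : M ∈ PauliGroup n) (hN : N ∈ PauliGroup n) :
    M * N ∈ PauliGroup n := by
  obtain ⟨a, p, rfl⟩ := hM
  obtain ⟨b, r, rfl⟩ := hN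
  rw [smul_mul_smul_comm, pauliOp_mul, smul_smul, ← pow_add, ← pow_add]
  exact pow_I_smul_pauliOp_mem_pauliGroup _ _

lemma IsHermPauli.mem_pauliGroup {M : QMat n} (hM : IsHermPauli M) : M ∈ PauliGroup n := by
  obtain ⟨s, p, hs | hs, rfl⟩ := hM <;> subst hs
  · simpa using pow_I_smul_pauliOp_mem_pauliGroup 0 p
  · simpa using pow_I_smul_pauliOp_mem_pauliGroup 2 p

lemma IsHermPauli.isHermitian {M : QMat n} (hM : IsHermPauli M) : M.IsHermitian := by
  obtain ⟨s, p, hs | hs, rfl⟩ := hM <;> subst hs <;>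
    simp [Matrix.IsHermitian, pauliOp_conjTranspose]

lemma IsHermPauli.mul_self {M : QMat n} (hM : IsHermPauli M) : M * M = 1 := by
  obtain ⟨s, p, hs | hs, rfl⟩ := hM <;> subst hs <;> simp [pauliOp_mul_self]

lemma mul_mem_stabGroup {ψ : QVec n} {g g' : QMat n} (hg : g ∈ stabGroup ψ)
    (hg' : g' ∈ stabGroup ψ) : g * g' ∈ stabGroup ψ :=
  ⟨mul_mem_pauliGroup hg.1 hg'.1, by rw [← Matrix.mulVec_mulVec, hg'.2, hg.2]⟩

lemma mul_self_of_mem_stabGroup {ψ : QVec n} (hψ : IsUnitVec ψ) {g : QMat n}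
    (hg : g ∈ stabGroup ψ) : g * g = 1 := by
  obtain ⟨⟨a, p, rfl⟩, hfix⟩ := hg
  have hsq : (I ^ (a : ℕ) • pauliOp p) * (I ^ (a : ℕ) • pauliOp p) =
      (I ^ (a : ℕ) * I ^ (a : ℕ)) • (1 : QMat n) := by
    rw [smul_mul_smul_comm, pauliOp_mul_self]
  have hfix2 : (I ^ (a : ℕ) * I ^ (a : ℕ)) • ψ = (1 : ℂ) • ψ := by
    calc _ = ((I ^ (a : ℕ) • pauliOp p) * (I ^ (a : ℕ) • pauliOp p)) *ᵥ ψ := by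
          rw [hsq, Matrix.smul_mulVec, Matrix.one_mulVec]
      _ = _ := by rw [← Matrix.mulVec_mulVec, hfix, hfix, one_smul]
  rw [hsq, smul_left_injective ℂ hψ.ne_zero hfix2, one_smul]

lemma neg_notMem_stabGroup {ψ : QVec n} (hψ : IsUnitVec ψ) {g : QMat n}
    (hg : g ∈ stabGroup ψ) : -g ∉ stabGroup ψ := fun hneg =>
  hψ.ne_zero (self_eq_neg.mp (by simpa [Matrix.neg_mulVec, hg.2] using hneg.2.symm))

lemma pow_I_eq_one_or_neg_one_of_star_eq {a : Fin 4} (h : star (I ^ (a : ℕ)) = I ^ (a : ℕ)) :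
    I ^ (a : ℕ) = 1 ∨ I ^ (a : ℕ) = -1 := by
  fin_cases a <;> simp [pow_succ, CharZero.neg_eq_self_iff, self_eq_neg] at h ⊢

lemma re_trace_mul_dm_sq_eq_of_eq_or_eq_neg {A B : QMat n} (ψ : QVec n) (h : A = B ∨ A = -B) :
    ((A * dm ψ).trace.re) ^ 2 = ((B * dm ψ).trace.re) ^ 2 := by
  rcases h with rfl | rfl <;> simp

lemma IsHermPauli.exists_mul_eq_pauliOp_or_eq_neg {ψ : QVec n} {M g : QMat n}
    (hM : IsHermPauli M) (hM0 : (M * dm ψ).trace ≠ 0) (hg : g ∈ stabGroup ψ) :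
    ∃ q, M * g = pauliOp q ∨ M * g = -pauliOp q := by
  obtain ⟨a, q, hq⟩ := mul_mem_pauliGroup hM.mem_pauliGroup hg.1
  have htr : (M * dm ψ).trace = I ^ (a : ℕ) * (pauliOp q * dm ψ).trace := by
    calc (M * dm ψ).trace = (M * g * dm ψ).trace := by rw [mul_assoc, mul_dm_of_mulVec_eq hg.2]
      _ = _ := by rw [hq, Matrix.smul_mul, Matrix.trace_smul, smul_eq_mul]
  have hq0 : (pauliOp q * dm ψ).trace ≠ 0 := fun h0 => hM0 (by rw [htr, h0, mul_zero])
  have hreal : star (I ^ (a : ℕ)) = I ^ (a : ℕ) := by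
    have h := star_trace_mul_dm hM.isHermitian ψ
    rw [htr, star_mul', star_trace_mul_dm (pauliOp_isHermitian q)] at h
    exact mul_right_cancel₀ hq0 h
  refine ⟨q, ?_⟩
  rcases pow_I_eq_one_or_neg_one_of_star_eq hreal with h1 | h1 <;> simp [hq, h1]

lemma eq_and_eq_of_mul_eq_or_eq_neg {ι : Type*} {ψ : QVec n} (hψ : IsUnitVec ψ)
    {h : ι → QMat n} (hherm : ∀ i, IsHermPauli (h i))
    (hdistinct : ∀ i j, i ≠ j → ∀ P ∈ stabGroup ψ, h i ≠ h j * P ∧ h i ≠ -(h j * P))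
    {i j : ι} {g g' : QMat n} (hg : g ∈ stabGroup ψ)
    (hg' : g' ∈ stabGroup ψ) (heq : h i * g = h j * g' ∨ h i * g = -(h j * g')) :
    i = j ∧ g = g' := by
  have hcoset : h i = h j * (g' * g) ∨ h i = -(h j * (g' * g)) := by
    have hcancel : h i = h i * g * g := by rw [mul_assoc, mul_self_of_mem_stabGroup hψ hg, mul_one]
    rcases heq with heq | heq
    · left; rw [hcancel, heq, mul_assoc]
    · right; rw [hcancel, heq, Matrix.neg_mul, mul_assoc]
  obtain rfl : i = j := by
    by_contra hij
    have := hdistinct i j hij _ (mul_mem_stabGroup hg' hg)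
    tauto
  have hcancel : ∀ x, x = h i * (h i * x) := by simp [← mul_assoc, (hherm i).mul_self]
  refine ⟨rfl, ?_⟩
  rcases heq with heq | heq
  · rw [hcancel g, heq, ← hcancel]
  · have hneg : g = -g' := by rw [hcancel g, heq, Matrix.mul_neg, ← hcancel]
    exact absurd (hneg ▸ hg) (neg_notMem_stabGroup hψ hg')

theorem ncard_stabGroup_mul_sum_sq_re_trace_le {ι : Type*} [Fintype ι] {ψ : QVec n}
    (hψ : IsUnitVec ψ) {h : ι → QMat n} (hherm : ∀ i, IsHermPauli (h i))
    (hnz : ∀ i, (h i * dm ψ).trace ≠ 0)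
    (hdistinct : ∀ i j, i ≠ j → ∀ P ∈ stabGroup ψ, h i ≠ h j * P ∧ h i ≠ -(h j * P)) :
    ((stabGroup ψ).ncard : ℝ) * ∑ i, ((h i * dm ψ).trace.re) ^ 2 ≤ 2 ^ n := by
  obtain hfin | hinf := (stabGroup ψ).finite_or_infinite
  swap
  · simp [hinf.ncard] -- `ncard` of an infinite set is `0`
  have := hfin.fintype
  choose F hF using fun x : ι × stabGroup ψ =>
    (hherm x.1).exists_mul_eq_pauliOp_or_eq_neg (hnz x.1) x.2.2
  have hF_inj : Function.Injective F := by
    rintro ⟨i, g⟩ ⟨j, g'⟩ hij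
    have hsign := eq_or_eq_neg_of_eq_or_eq_neg (hF (i, g)) (hij ▸ hF (j, g'))
    obtain ⟨rfl, hgg'⟩ := eq_and_eq_of_mul_eq_or_eq_neg hψ hherm hdistinct g.2 g'.2 hsign
    rw [Subtype.ext hgg']
  have hF_val : ∀ x, ((pauliOp (F x) * dm ψ).trace.re) ^ 2 = ((h x.1 * dm ψ).trace.re) ^ 2 := by
    rintro ⟨i, g, hg⟩
    rw [← re_trace_mul_dm_sq_eq_of_eq_or_eq_neg ψ (hF (i, ⟨g, hg⟩)), mul_assoc,
      mul_dm_of_mulVec_eq hg.2]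
  calc ((stabGroup ψ).ncard : ℝ) * ∑ i, ((h i * dm ψ).trace.re) ^ 2
      = ∑ x : ι × stabGroup ψ, ((pauliOp (F x) * dm ψ).trace.re) ^ 2 := by
        simp only [Fintype.sum_prod_type, hF_val, Finset.sum_const, Finset.card_univ,
          nsmul_eq_mul, Finset.mul_sum, ← Nat.card_eq_fintype_card, Nat.card_coe_set_eq]
    _ ≤ ∑ p, ((pauliOp p * dm ψ).trace.re) ^ 2 :=
        Fintype.sum_comp_le_sum_of_injective hF_inj
          (f := fun p => ((pauliOp p * dm ψ).trace.re) ^ 2) fun _ => sq_nonneg _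
    _ = 2 ^ n := sum_sq_re_trace_pauliOp_mul_dm hψ

theorem statement5_general (n ν k : ℕ) (ψ : QVec n) (hψ : IsUnitVec ψ)
    (hcard : (stabGroup ψ).ncard = 2 ^ (n - ν))
    (h : Fin (k + 1) → QMat n)
    (hherm : ∀ i, IsHermPauli (h i))
    (hnz : ∀ i, Matrix.trace (h i * dm ψ) ≠ 0)
    (hdistinct : ∀ i j, i ≠ j → ∀ P ∈ stabGroup ψ, h i ≠ h j * P ∧ h i ≠ -(h j * P)) :
    ∑ i, ((Matrix.trace (h i * dm ψ)).re) ^ 2 ≤ (2 : ℝ) ^ ν := by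
  have hbound := ncard_stabGroup_mul_sum_sq_re_trace_le hψ hherm hnz hdistinct
  rw [hcard, Nat.cast_pow, Nat.cast_ofNat] at hbound
  have hpow : (2 : ℝ) ^ n ≤ 2 ^ (n - ν) * 2 ^ ν := by
    rw [← pow_add]
    exact pow_le_pow_right₀ one_le_two (by omega)
  exact le_of_mul_le_mul_left (hbound.trans hpow) (by positivity)

/-- for Hermitian Paulis `h₀ = 𝟙, h₁, …, h_k` with nonzero expectation on
a state of stabilizer nullity ν, lying in pairwise distinct (signed) cosets of the
stabilizer group, `Σ_i Tr(h_i ψ)² ≤ 2^ν`. -/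
theorem statement5 (n ν k : ℕ) (hνn : ν ≤ n) (ψ : QVec n) (hψ : IsUnitVec ψ)
    (hcard : (stabGroup ψ).ncard = 2 ^ (n - ν))
    (h : Fin (k + 1) → QMat n) (h0 : h 0 = 1)
    (hherm : ∀ i, IsHermPauli (h i))
    (hnz : ∀ i, Matrix.trace (h i * dm ψ) ≠ 0)
    (hdistinct : ∀ i j, i ≠ j → ∀ P ∈ stabGroup ψ, h i ≠ h j * P ∧ h i ≠ -(h j * P)) :
    ∑ i, ((Matrix.trace (h i * dm ψ)).re) ^ 2 ≤ (2 : ℝ) ^ ν :=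
  statement5_general n ν k ψ hψ hcard h hherm hnz hdistinct

end
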